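/- arXiv:1708.05847 — 2 statements merged into one kernel-verified Lean document; each statement's English description precedes it below -/
import Mathlib

section
/- Let (N,m0) be a marked N-layer (open or closed) Π³-net. Then R(m0) ⊆ ⋂_{i=1}^N Inv_i(m0). -/
open Finset

section PetriBasics

variable {P T : Type} [Fintype P] [Fintype T]

/-- Transition `t` is enabled at marking `m`. -/
def Enabled (Wm : P → T → ℕ) (m : P → ℕ) (t : T) : Prop :=
  ∀ p, Wm p t ≤ m p

/-- The marking obtained by firing transition `t` at marking `m`. -/
def Fire (Wm Wp : P → T → ℕ) (m : P → ℕ) (t : T) : P → ℕ :=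
  fun p => m p - Wm p t + Wp p t

/-- One firing step. -/
def Step (Wm Wp : P → T → ℕ) (m m' : P → ℕ) : Prop :=
  ∃ t, Enabled Wm m t ∧ m' = Fire Wm Wp m t

/-- Reachability. -/
def Reach (Wm Wp : P → T → ℕ) : (P → ℕ) → (P → ℕ) → Prop :=
  Relation.ReflTransGen (Step Wm Wp)

/-- One firing step using a transition from the set `S`. -/
def StepIn (Wm Wp : P → T → ℕ) (S : T → Prop) (m m' : P → ℕ) : Prop :=
  ∃ t, S t ∧ Enabled Wm m t ∧ m' = Fire Wm Wp m t

/-- Reachability using only transitions from the set `S`. -/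
def ReachIn (Wm Wp : P → T → ℕ) (S : T → Prop) : (P → ℕ) → (P → ℕ) → Prop :=
  Relation.ReflTransGen (StepIn Wm Wp S)

/-- The marked net `(N, m0)` is live. -/
def LiveMarked (Wm Wp : P → T → ℕ) (m0 : P → ℕ) : Prop :=
  ∀ (t : T) (m : P → ℕ), Reach Wm Wp m0 m →
    ∃ m', Reach Wm Wp m m' ∧ Enabled Wm m' t

/-- `b` is a bag of the net. -/
def IsBag (Wm Wp : P → T → ℕ) (b : P → ℕ) : Prop :=
  ∃ t, b = (fun p => Wm p t) ∨ b = (fun p => Wp p t)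

/-- Edges of the bag graph. -/
def BagEdge (Wm Wp : P → T → ℕ) (b b' : P → ℕ) : Prop :=
  ∃ t, b = (fun p => Wm p t) ∧ b' = (fun p => Wp p t)

/-- Every connected component of the bag graph is strongly connected. -/
def WeaklyReversible (Wm Wp : P → T → ℕ) : Prop :=
  ∀ b b' : P → ℕ,
    Relation.ReflTransGen (fun x y => BagEdge Wm Wp x y ∨ BagEdge Wm Wp y x) b b' →
    Relation.ReflTransGen (BagEdge Wm Wp) b b'

/-- `w · W(t)`, where `W = W⁺ − W⁻` is the incidence matrix. -/
def IncDot (Wm Wp : P → T → ℕ) (w : P → ℚ) (t : T) : ℚ :=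
  ∑ p, w p * ((Wp p t : ℚ) - (Wm p t : ℚ))

/-- `w` is a witness of the bag `b`. -/
def IsWitness (Wm Wp : P → T → ℕ) (b : P → ℕ) (w : P → ℚ) : Prop :=
  ∀ t, (b = (fun p => Wm p t) → IncDot Wm Wp w t = -1) ∧
       (b = (fun p => Wp p t) → IncDot Wm Wp w t = 1) ∧
       (b ≠ (fun p => Wm p t) → b ≠ (fun p => Wp p t) → IncDot Wm Wp w t = 0)

/-- `N` is a Π²-net. -/
def IsPi2 (Wm Wp : P → T → ℕ) : Prop :=
  WeaklyReversible Wm Wp ∧ ∀ b, IsBag Wm Wp b → ∃ w, IsWitness Wm Wp b w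

/-- The potential of a place: `‖b_p‖ − 1`. -/
def potOf (bag : P → P → ℕ) (p : P) : ℕ := (∑ q, bag p q) - 1

/-- Minimum of `f` over `S`, with default value `d` when `S` is empty. -/
def minPotD {α : Type} (S : Finset α) (f : α → ℕ) (d : ℕ) : ℕ :=
  if h : S.Nonempty then S.inf' h f else d

end PetriBasics

/-- An `Nn`-layer closed Π³-net. -/
structure ClosedPi3 (P T : Type) [Fintype P] [Fintype T] (Nn : ℕ) where
  Wm : P → T → ℕ
  Wp : P → T → ℕ
  no_useless : ∀ t, (fun p => Wm p t) ≠ (fun p => Wp p t)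
  no_dup : ∀ t t' : T, (fun p => Wm p t) = (fun p => Wm p t') →
      (fun p => Wp p t) = (fun p => Wp p t') → t = t'
  /-- the bag associated with each place -/
  bag : P → P → ℕ
  /-- the layer of each place -/
  layer : P → ℕ
  bag_isBag : ∀ p, IsBag Wm Wp (bag p)
  bag_surj : ∀ b, IsBag Wm Wp b → ∃ p, bag p = b
  bag_inj : Function.Injective bag
  bag_self : ∀ p, bag p p = 1
  layer_pos : ∀ p, 1 ≤ layer p
  layer_le : ∀ p, layer p ≤ Nn
  layer_surj : ∀ i, 1 ≤ i → i ≤ Nn → ∃ p, layer p = i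
  edge_layer : ∀ p q : P, BagEdge Wm Wp (bag p) (bag q) → layer p = layer q
  layer_conn : ∀ p q : P, layer p = layer q →
      Relation.ReflTransGen (BagEdge Wm Wp) (bag p) (bag q)
  resource : ∀ p q : P, q ≠ p → 0 < bag p q →
      layer q + 1 = layer p ∧ ∀ r, layer r = layer q → potOf bag r ≤ potOf bag q

namespace ClosedPi3

variable {P T : Type} [Fintype P] [Fintype T] {Nn : ℕ} (C : ClosedPi3 P T Nn)

def pot (p : P) : ℕ := potOf C.bag p

/-- `P_i`: the places of layer `i`. -/
def places (i : ℕ) : Finset P := Finset.univ.filter (fun p => C.layer p = i)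

/-- `POT_i`: the maximal potential in layer `i`. -/
def POT (i : ℕ) : ℕ := (C.places i).sup C.pot

/-- `P_i^max`: the places of maximal potential in layer `i`. -/
def placesMax (i : ℕ) : Finset P := (C.places i).filter (fun p => C.pot p = C.POT i)

/-- `cin(p) = POT_i − pot(p)` for `p ∈ P_i`. -/
def cin (p : P) : ℤ := (C.POT (C.layer p) : ℤ) - (C.pot p : ℤ)

/-- The invariant vector `v^(i)` (for `i = Nn` this is `v^(N)`). -/
def vvec (i : ℕ) : P → ℤ :=
  if i = Nn then (fun p => if C.layer p = Nn then 1 else 0)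
  else fun p => (if C.layer p = i then 1 else 0) + (if C.layer p = i + 1 then C.cin p else 0)

/-- `m · v^(i)`. -/
def vdot (i : ℕ) (m : P → ℕ) : ℤ := ∑ p, C.vvec i p * (m p : ℤ)

/-- `m ∈ Inv_i(m0)`. -/
def InvSet (m0 : P → ℕ) (i : ℕ) (m : P → ℕ) : Prop := C.vdot i m = C.vdot i m0

/-- `m ∈ Live_i`. -/
def LiveSet (i : ℕ) (m : P → ℕ) : Prop :=
  if i = Nn then 0 < ∑ p ∈ C.places Nn, m p
  else minPotD ((C.places (i + 1)).filter (fun p => 0 < m p)) C.pot (C.POT (i + 1))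
        ≤ ∑ p ∈ C.places i, m p

/-- `t` belongs to `⋃ {T_i | S i}`: the input bag of `t` lies in a layer satisfying `S`. -/
def transIn (S : ℕ → Prop) (t : T) : Prop :=
  ∃ p, S (C.layer p) ∧ C.bag p = (fun q => C.Wm q t)

/-- The marking `m` is `i`-live. -/
def iLive (i : ℕ) (m : P → ℕ) : Prop :=
  ∀ t, C.transIn (· ≤ i) t →
    ∃ m', ReachIn C.Wm C.Wp (C.transIn (· ≤ i)) m m' ∧ Enabled C.Wm m' t

end ClosedPi3

/-- An `Nn`-layer open Π³-net over places `P`: it is obtained from an `Nn`-layer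
closed Π³-net over `Option P` by deleting the place `none` (a.k.a. `p_ext`),
which lies in layer `Nn`. -/
structure OpenPi3 (P T : Type) [Fintype P] [Fintype T] (Nn : ℕ) where
  closed : ClosedPi3 (Option P) T Nn
  pext_layer : closed.layer none = Nn

namespace OpenPi3

variable {P T : Type} [Fintype P] [Fintype T] {Nn : ℕ} (O : OpenPi3 P T Nn)

/-- Backward incidence matrix of the open net. -/
def Wm : P → T → ℕ := fun p t => O.closed.Wm (some p) t

/-- Forward incidence matrix of the open net. -/
def Wp : P → T → ℕ := fun p t => O.closed.Wp (some p) t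

def layer (p : P) : ℕ := O.closed.layer (some p)

def pot (p : P) : ℕ := O.closed.pot (some p)

/-- `pot(p_ext)`. -/
def potExt : ℕ := O.closed.pot none

/-- `P_i`: the (remaining) places of layer `i`. -/
def places (i : ℕ) : Finset P := Finset.univ.filter (fun p => O.layer p = i)

/-- `POT_i`, with `POT_N = pot(p_ext)` for open nets. -/
def POT (i : ℕ) : ℕ := if i = Nn then O.potExt else (O.places i).sup O.pot

def placesMax (i : ℕ) : Finset P := (O.places i).filter (fun p => O.pot p = O.POT i)

def cin (p : P) : ℤ := (O.POT (O.layer p) : ℤ) - (O.pot p : ℤ)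

/-- The invariant vector `v^(i)` (used for `1 ≤ i ≤ Nn − 1`). -/
def vvec (i : ℕ) : P → ℤ :=
  fun p => (if O.layer p = i then 1 else 0) + (if O.layer p = i + 1 then O.cin p else 0)

def vdot (i : ℕ) (m : P → ℕ) : ℤ := ∑ p, O.vvec i p * (m p : ℤ)

def InvSet (m0 : P → ℕ) (i : ℕ) (m : P → ℕ) : Prop :=
  if i = Nn then True else O.vdot i m = O.vdot i m0

/-- `m ∈ Live_i` for the open net: for `i = N − 1` the virtual place `p_ext`
always counts as marked. -/
def LiveSet (i : ℕ) (m : P → ℕ) : Prop :=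
  if i = Nn then True
  else if i + 1 = Nn then
    min O.potExt
        (minPotD ((O.places Nn).filter (fun p => 0 < m p)) O.pot O.potExt)
      ≤ ∑ p ∈ O.places i, m p
  else
    minPotD ((O.places (i + 1)).filter (fun p => 0 < m p)) O.pot (O.POT (i + 1))
      ≤ ∑ p ∈ O.places i, m p

def transIn (S : ℕ → Prop) (t : T) : Prop := O.closed.transIn S t

def iLive (i : ℕ) (m : P → ℕ) : Prop :=
  ∀ t, O.transIn (· ≤ i) t →
    ∃ m', ReachIn O.Wm O.Wp (O.transIn (· ≤ i)) m m' ∧ Enabled O.Wm m' t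

end OpenPi3

/-! Each `v^(i)` is a place invariant. Its product with a bag `b_p` depends only on the layer
of `p`: the places of `b_p` other than `p` are maximal-potential places of the layer below, where
`cin` vanishes, and they carry `pot p` tokens, which `cin p` tops up to `POT`. The two bags of
a transition lie in one layer, so `v^(i)` is orthogonal to `W⁺(t) − W⁻(t)`. For an open net,
extend `v^(i)` by `0` at `p_ext`; the bag of `p_ext` then has product `pot(p_ext) = POT_N`
with it, so the layer-wise formula persists. -/

section Conservation

variable {P T : Type} [Fintype P] {Wm Wp : P → T → ℕ}

theorem sum_mul_fire (v : P → ℤ) {m : P → ℕ} {t : T} (ht : Enabled Wm m t) :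
    ∑ p, v p * (Fire Wm Wp m t p : ℤ) =
      ∑ p, v p * (m p : ℤ) - ∑ p, v p * (Wm p t : ℤ) + ∑ p, v p * (Wp p t : ℤ) := by
  have hcast : ∀ p, (Fire Wm Wp m t p : ℤ) = m p - Wm p t + Wp p t := fun p => by
    have := ht p
    simp only [Fire]
    omega
  simp only [hcast, mul_add, mul_sub, sum_add_distrib, sum_sub_distrib]

theorem sum_mul_eq_of_reach (v : P → ℤ)
    (hv : ∀ t, ∑ p, v p * (Wm p t : ℤ) = ∑ p, v p * (Wp p t : ℤ)) {m0 m : P → ℕ}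
    (h : Reach Wm Wp m0 m) : ∑ p, v p * (m p : ℤ) = ∑ p, v p * (m0 p : ℤ) := by
  induction h with
  | refl => rfl
  | tail _ hstep ih =>
    obtain ⟨t, ht, rfl⟩ := hstep
    rw [sum_mul_fire v ht, hv t, sub_add_cancel, ih]

end Conservation

namespace ClosedPi3

variable {P T : Type} [Fintype P] [Fintype T] {Nn : ℕ} (C : ClosedPi3 P T Nn)

theorem sum_erase_bag [DecidableEq P] (p : P) : ∑ q ∈ univ.erase p, C.bag p q = C.pot p := by
  have h := sum_erase_add univ (C.bag p) (mem_univ p)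
  have hb := C.bag_self p
  unfold pot potOf
  omega

theorem mem_placesMax_of_bag_pos {p q : P} (hqp : q ≠ p) (hb : 0 < C.bag p q) :
    q ∈ C.placesMax (C.layer q) := by
  obtain ⟨-, hmax⟩ := C.resource p q hqp hb
  have hq : q ∈ C.places (C.layer q) := by simp [places]
  refine mem_filter.2 ⟨hq, le_antisymm (Finset.le_sup hq) (Finset.sup_le fun r hr => ?_)⟩
  exact hmax r (mem_filter.1 hr).2

/-- The places `q ≠ p` of the bag `b_p` lie in `P^max` of the layer below that of `p`,
and they carry `pot p` tokens in total. -/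
theorem sum_mul_bag (v : P → ℤ) (a : ℕ → ℤ)
    (hv : ∀ j < Nn, ∀ q ∈ C.placesMax j, v q = a j) (p : P) :
    ∑ q, v q * (C.bag p q : ℤ) = v p + a (C.layer p - 1) * C.pot p := by
  classical
  have hrest : ∀ q ∈ univ.erase p, v q * (C.bag p q : ℤ) = a (C.layer p - 1) * C.bag p q := by
    intro q hq
    rcases Nat.eq_zero_or_pos (C.bag p q) with hb | hb
    · simp [hb]
    have hqp := (mem_erase.1 hq).1
    obtain ⟨hlayer, -⟩ := C.resource p q hqp hb
    have hlt : C.layer q < Nn := by have := C.layer_le p; omega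
    rw [hv _ hlt q (C.mem_placesMax_of_bag_pos hqp hb), show C.layer p - 1 = C.layer q by omega]
  rw [← sum_erase_add _ _ (mem_univ p), sum_congr rfl hrest, ← mul_sum, ← Nat.cast_sum,
    sum_erase_bag, C.bag_self]
  ring

theorem sum_mul_Wm_eq_sum_mul_Wp (v : P → ℤ) (g : ℕ → ℤ)
    (hv : ∀ p, ∑ q, v q * (C.bag p q : ℤ) = g (C.layer p)) (t : T) :
    ∑ q, v q * (C.Wm q t : ℤ) = ∑ q, v q * (C.Wp q t : ℤ) := by
  obtain ⟨pm, hpm⟩ := C.bag_surj _ ⟨t, Or.inl rfl⟩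
  obtain ⟨pp, hpp⟩ := C.bag_surj _ ⟨t, Or.inr rfl⟩
  have hlayer := C.edge_layer pm pp ⟨t, hpm, hpp⟩
  calc ∑ q, v q * (C.Wm q t : ℤ) = g (C.layer pm) := by rw [← hv, hpm]
    _ = g (C.layer pp) := by rw [hlayer]
    _ = ∑ q, v q * (C.Wp q t : ℤ) := by rw [← hv, hpp]

theorem cin_eq_zero_of_mem_placesMax {j : ℕ} {q : P} (hq : q ∈ C.placesMax j) :
    C.cin q = 0 := by
  obtain ⟨hq, hpot⟩ := mem_filter.1 hq
  rw [cin, (mem_filter.1 hq).2, hpot, sub_self]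

theorem sum_vvec_top_mul_bag (p : P) :
    ∑ q, C.vvec Nn q * (C.bag p q : ℤ) = if C.layer p = Nn then 1 else 0 := by
  rw [C.sum_mul_bag _ (fun j => if j = Nn then 1 else 0) (fun j _ q hq => ?_)]
  · have hv : C.vvec Nn p = if C.layer p = Nn then 1 else 0 := by simp [vvec]
    have := C.layer_pos p
    have := C.layer_le p
    rw [hv]
    split_ifs <;> omega
  · simp [vvec, (mem_filter.1 (mem_filter.1 hq).1).2]

theorem sum_vvec_mul_bag {i : ℕ} (hi : i ≠ Nn) (p : P) :
    ∑ q, C.vvec i q * (C.bag p q : ℤ) =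
      (if C.layer p = i then 1 else 0) +
        if C.layer p = i + 1 then (C.POT (i + 1) : ℤ) else 0 := by
  rw [C.sum_mul_bag _ (fun j => if j = i then 1 else 0) (fun j _ q hq => ?_)]
  · have := C.layer_pos p
    simp only [vvec, if_neg hi, cin]
    split_ifs <;> first | omega | simp_all
  · have hqj : C.layer q = j := (mem_filter.1 (mem_filter.1 hq).1).2
    simp [vvec, if_neg hi, C.cin_eq_zero_of_mem_placesMax hq, hqj]

theorem vdot_eq_of_reach (i : ℕ) {m0 m : P → ℕ} (h : Reach C.Wm C.Wp m0 m) :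
    C.vdot i m = C.vdot i m0 := by
  by_cases hi : i = Nn
  · subst hi
    exact sum_mul_eq_of_reach _
      (C.sum_mul_Wm_eq_sum_mul_Wp _ (fun L => if L = i then 1 else 0) C.sum_vvec_top_mul_bag) h
  · exact sum_mul_eq_of_reach _ (C.sum_mul_Wm_eq_sum_mul_Wp _
      (fun L => (if L = i then 1 else 0) + if L = i + 1 then (C.POT (i + 1) : ℤ) else 0)
      (C.sum_vvec_mul_bag hi)) h

end ClosedPi3

namespace OpenPi3

variable {P T : Type} [Fintype P] [Fintype T] {Nn : ℕ} (O : OpenPi3 P T Nn)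

theorem POT_eq_closed_POT {j : ℕ} (hj : j ≠ Nn) : O.POT j = O.closed.POT j := by
  rw [POT, if_neg hj]
  refine le_antisymm (Finset.sup_le fun p hp => ?_) (Finset.sup_le fun x hx => ?_)
  · exact Finset.le_sup (f := O.closed.pot) (mem_filter.2 ⟨mem_univ _, (mem_filter.1 hp).2⟩)
  · have hx : O.closed.layer x = j := (mem_filter.1 hx).2
    cases x with
    | none => exact absurd (hx.symm.trans O.pext_layer) hj
    | some p => exact Finset.le_sup (f := O.pot) (mem_filter.2 ⟨mem_univ _, hx⟩)

def vvecExt (i : ℕ) (x : Option P) : ℤ := x.elim 0 (O.vvec i)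

theorem sum_vvecExt_mul_bag {i : ℕ} (hi : i < Nn) (x : Option P) :
    ∑ q, O.vvecExt i q * (O.closed.bag x q : ℤ) =
      (if O.closed.layer x = i then 1 else 0) +
        if O.closed.layer x = i + 1 then (O.POT (i + 1) : ℤ) else 0 := by
  rw [O.closed.sum_mul_bag _ (fun j => if j = i then 1 else 0) (fun j hj q hq => ?_)]
  · cases x with
    | none =>
      have hpot : O.closed.pot none = O.potExt := rfl
      simp only [vvecExt, Option.elim, O.pext_layer, hpot]
      split_ifs <;> first | omega | simp_all [POT]
    | some p =>
      have hL : O.closed.layer (some p) = O.layer p := rfl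
      have hpot : O.closed.pot (some p) = O.pot p := rfl
      have hL1 : 1 ≤ O.layer p := O.closed.layer_pos _
      simp only [vvecExt, Option.elim, vvec, cin, hL, hpot]
      split_ifs <;> first | omega | simp_all
  · have hqj : O.closed.layer q = j := (mem_filter.1 (mem_filter.1 hq).1).2
    cases q with
    | none => exact absurd (hqj.symm.trans O.pext_layer) hj.ne
    | some q =>
      have hcin := O.closed.cin_eq_zero_of_mem_placesMax hq
      have hL : O.layer q = j := hqj
      simp only [ClosedPi3.cin, hqj] at hcin
      simp only [vvecExt, Option.elim, vvec, cin, hL, O.POT_eq_closed_POT hj.ne]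
      split_ifs <;> simp_all [pot]

theorem vdot_eq_of_reach {i : ℕ} (hi : i < Nn) {m0 m : P → ℕ} (h : Reach O.Wm O.Wp m0 m) :
    O.vdot i m = O.vdot i m0 := by
  refine sum_mul_eq_of_reach _ (fun t => ?_) h
  have := O.closed.sum_mul_Wm_eq_sum_mul_Wp _
    (fun L => (if L = i then 1 else 0) + if L = i + 1 then (O.POT (i + 1) : ℤ) else 0)
    (O.sum_vvecExt_mul_bag hi) t
  simpa [Fintype.sum_option, vvecExt, Wm, Wp] using this

end OpenPi3

/-- `R(m0) ⊆ ⋂_{i=1}^N Inv_i(m0)` for marked N-layer (open or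
closed) Π³-nets. -/
theorem stmt_3 :
    (∀ (P T : Type) [Fintype P] [Fintype T] (Nn : ℕ) (C : ClosedPi3 P T Nn)
        (m0 m : P → ℕ), Reach C.Wm C.Wp m0 m →
      ∀ i ∈ Finset.Icc 1 Nn, C.InvSet m0 i m) ∧
    (∀ (P T : Type) [Fintype P] [Fintype T] (Nn : ℕ) (O : OpenPi3 P T Nn)
        (m0 m : P → ℕ), Reach O.Wm O.Wp m0 m →
      ∀ i ∈ Finset.Icc 1 Nn, O.InvSet m0 i m) := by
  refine ⟨fun P T _ _ Nn C m0 m h i _ => C.vdot_eq_of_reach i h, ?_⟩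
  intro P T _ _ Nn O m0 m h i hi
  by_cases hN : i = Nn
  · simp [OpenPi3.InvSet, hN]
  · rw [OpenPi3.InvSet, if_neg hN]
    exact O.vdot_eq_of_reach (lt_of_le_of_ne (mem_Icc.1 hi).2 hN) h
end

section
/- Let N be an N-layer (open or closed) Π³-net and fix 1≤i≤N. If m∈Live_i and m'∈R(m), then m'∈Live_i. -/
open Finset

/-!
A transition whose bags lie in layer `j` consumes one token of layer `j` and `pot p_in` tokens
of layer `j - 1`, and produces one token of layer `j` and `pot p_out` tokens of layer `j - 1`.
Hence `m · P_N` never changes, and `m · P_i` changes only under transitions of layer `i + 1`;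
such a transition marks its output place `p_out ∈ P_{i+1}` and leaves `m' · P_i ≥ pot p_out`.
Any other transition can empty a place of `P_{i+1}` only by consuming it as a resource, which
forces it to have the maximal potential `POT_{i+1}`; so the minimum in `Live_i` cannot grow.
The open net is reduced to the closed one by putting enough tokens on `p_ext`.
-/

theorem Reach.invariant {P T : Type} {Wm Wp : P → T → ℕ} {S : (P → ℕ) → Prop}
    (hS : ∀ m m', Step Wm Wp m m' → S m → S m') {m m' : P → ℕ}
    (hr : Reach Wm Wp m m') (hm : S m) : S m' := by
  induction hr with
  | refl => exact hm
  | tail _ hstep ih => exact hS _ _ hstep ih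

section Fire

variable {P T : Type} {Wm Wp : P → T → ℕ} {m : P → ℕ} {t : T} {q : P}

lemma fire_pos_of_Wm_eq_zero (hq : Wm q t = 0) (hm : 0 < m q) : 0 < Fire Wm Wp m t q := by
  unfold Fire; omega

lemma fire_pos_of_Wp_pos (hq : 0 < Wp q t) : 0 < Fire Wm Wp m t q := by
  unfold Fire; omega

lemma sum_fire_add_sum_Wm (hen : Enabled Wm m t) (S : Finset P) :
    ∑ q ∈ S, Fire Wm Wp m t q + ∑ q ∈ S, Wm q t = ∑ q ∈ S, m q + ∑ q ∈ S, Wp q t := by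
  rw [← sum_add_distrib, ← sum_add_distrib]
  refine sum_congr rfl fun q _ => ?_
  have := hen q
  unfold Fire; omega

end Fire

section MinPotD

variable {α : Type} {S : Finset α} {f : α → ℕ} {d : ℕ}

lemma minPotD_le_of_mem {p : α} (hp : p ∈ S) : minPotD S f d ≤ f p := by
  unfold minPotD
  rw [dif_pos ⟨p, hp⟩]
  exact inf'_le f hp

lemma minPotD_le_default (h : ∀ p ∈ S, f p ≤ d) : minPotD S f d ≤ d := by
  unfold minPotD
  split_ifs with hS
  · obtain ⟨p, hp, he⟩ := exists_mem_eq_inf' hS f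
    exact he ▸ h p hp
  · exact le_rfl

lemma le_minPotD {a : ℕ} (h : ∀ p ∈ S, a ≤ f p) (hd : a ≤ d) : a ≤ minPotD S f d := by
  unfold minPotD
  split_ifs with hS
  · exact le_inf' hS f h
  · exact hd

lemma minPotD_map {β : Type} (e : β ↪ α) (s : Finset β) :
    minPotD (s.map e) f d = minPotD s (f ∘ e) d := by
  unfold minPotD
  by_cases hs : s.Nonempty
  · rw [dif_pos hs, dif_pos (hs.map), inf'_map]
  · rw [dif_neg hs, dif_neg (by simpa using hs)]

lemma minPotD_insert [DecidableEq α] (a : α) :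
    minPotD (insert a S) f d = min (f a) (minPotD S f (f a)) := by
  unfold minPotD
  rw [dif_pos (insert_nonempty a S)]
  by_cases hS : S.Nonempty
  · rw [dif_pos hS, inf'_insert]
  · rw [dif_neg hS, not_nonempty_iff_eq_empty.1 hS]
    simp

end MinPotD

namespace ClosedPi3

variable {P T : Type} [Fintype P] [Fintype T] {Nn : ℕ} (C : ClosedPi3 P T Nn)

lemma mem_places {p : P} {i : ℕ} : p ∈ C.places i ↔ C.layer p = i := by
  simp [places]

lemma sum_bag (p : P) : ∑ q, C.bag p q = C.pot p + 1 := by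
  have : 1 ≤ ∑ q, C.bag p q :=
    C.bag_self p ▸ single_le_sum (fun _ _ => Nat.zero_le _) (mem_univ p)
  unfold pot potOf
  omega

lemma bag_eq_zero {p q : P} (hqp : q ≠ p) (hlay : C.layer q + 1 ≠ C.layer p) :
    C.bag p q = 0 := by
  by_contra h
  exact hlay (C.resource p q hqp (Nat.pos_of_ne_zero h)).1

lemma sum_bag_places (p : P) (k : ℕ) :
    ∑ q ∈ C.places k, C.bag p q =
      (if C.layer p = k then 1 else 0) + (if C.layer p = k + 1 then C.pot p else 0) := by
  by_cases hk : C.layer p = k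
  · rw [if_pos hk, if_neg (by omega), sum_eq_single_of_mem p (C.mem_places.2 hk)]
    · exact C.bag_self p
    · intro q hq hqp
      exact C.bag_eq_zero hqp (by rw [C.mem_places.1 hq]; omega)
  rw [if_neg hk]
  by_cases hk1 : C.layer p = k + 1
  · have hrest : ∑ q ∈ univ.filter (fun q => ¬ C.layer q = k), C.bag p q = 1 := by
      rw [sum_eq_single_of_mem p (by simp [hk])]
      · exact C.bag_self p
      · intro q hq hqp
        exact C.bag_eq_zero hqp (by simp only [mem_filter] at hq; omega)
    have := sum_filter_add_sum_filter_not univ (fun q => C.layer q = k) (C.bag p)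
    rw [if_pos hk1, places]
    linarith [C.sum_bag p]
  · rw [if_neg hk1, add_zero]
    refine sum_eq_zero fun q hq => C.bag_eq_zero ?_ (by rw [C.mem_places.1 hq]; omega)
    rintro rfl
    exact hk (C.mem_places.1 hq)

lemma exists_input_output (t : T) : ∃ pm pp, C.bag pm = (fun q => C.Wm q t) ∧
    C.bag pp = (fun q => C.Wp q t) ∧ C.layer pm = C.layer pp := by
  obtain ⟨pm, hpm⟩ := C.bag_surj _ ⟨t, Or.inl rfl⟩
  obtain ⟨pp, hpp⟩ := C.bag_surj _ ⟨t, Or.inr rfl⟩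
  exact ⟨pm, pp, hpm, hpp, C.edge_layer pm pp ⟨t, hpm, hpp⟩⟩

variable {C} {t : T} {pm pp : P}

lemma sum_places_fire {m : P → ℕ} (hen : Enabled C.Wm m t) (hpm : C.bag pm = (fun q => C.Wm q t))
    (hpp : C.bag pp = (fun q => C.Wp q t)) (hlay : C.layer pm = C.layer pp) (k : ℕ) :
    ∑ q ∈ C.places k, Fire C.Wm C.Wp m t q + (if C.layer pm = k + 1 then C.pot pm else 0) =
      ∑ q ∈ C.places k, m q + (if C.layer pm = k + 1 then C.pot pp else 0) := by
  have hfire := sum_fire_add_sum_Wm (Wp := C.Wp) hen (C.places k)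
  have hin := C.sum_bag_places pm k
  have hout := C.sum_bag_places pp k
  simp only [hpm, hpp, ← hlay] at hin hout
  split_ifs at hin hout ⊢ <;> omega

lemma pot_le_sum_places {m : P → ℕ} (hen : Enabled C.Wm m t)
    (hpm : C.bag pm = (fun q => C.Wm q t)) {k : ℕ} (hk : C.layer pm = k + 1) :
    C.pot pm ≤ ∑ q ∈ C.places k, m q := by
  have h := C.sum_bag_places pm k
  rw [if_neg (by omega), if_pos hk, zero_add, hpm] at h
  exact h ▸ sum_le_sum fun q _ => hen q

lemma minPotD_marked_fire_le (m : P → ℕ) (hpm : C.bag pm = (fun q => C.Wm q t)) {k : ℕ}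
    (hk : C.layer pm ≠ k) :
    minPotD ((C.places k).filter (fun p => 0 < Fire C.Wm C.Wp m t p)) C.pot (C.POT k) ≤
      minPotD ((C.places k).filter (fun p => 0 < m p)) C.pot (C.POT k) := by
  have hle_POT : minPotD ((C.places k).filter (fun p => 0 < Fire C.Wm C.Wp m t p)) C.pot
      (C.POT k) ≤ C.POT k :=
    minPotD_le_default fun p hp => le_sup (mem_filter.1 hp).1
  refine le_minPotD (fun q hq => ?_) hle_POT
  obtain ⟨hqk, hmq⟩ := mem_filter.1 hq
  by_cases hWm : C.Wm q t = 0
  · exact minPotD_le_of_mem (mem_filter.2 ⟨hqk, fire_pos_of_Wm_eq_zero hWm hmq⟩)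
  · have hqp : q ≠ pm := by
      rintro rfl
      exact hk (C.mem_places.1 hqk)
    have hres := C.resource pm q hqp (by rw [congrFun hpm q]; omega)
    refine hle_POT.trans (Finset.sup_le fun r hr => hres.2 r ?_)
    rw [C.mem_places.1 hr, C.mem_places.1 hqk]

lemma liveSet_step {i : ℕ} {m m' : P → ℕ} (hs : Step C.Wm C.Wp m m')
    (hl : C.LiveSet i m) : C.LiveSet i m' := by
  obtain ⟨t, hen, rfl⟩ := hs
  obtain ⟨pm, pp, hpm, hpp, hlay⟩ := C.exists_input_output t
  have hsum := sum_places_fire hen hpm hpp hlay i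
  unfold LiveSet at hl ⊢
  split_ifs at hl ⊢ with hN
  · subst hN
    have := C.layer_le pm
    simp only [if_neg (show C.layer pm ≠ i + 1 by omega)] at hsum
    omega
  by_cases hj : C.layer pm = i + 1
  · rw [if_pos hj, if_pos hj] at hsum
    have hpp_marked : pp ∈ (C.places (i + 1)).filter (fun p => 0 < Fire C.Wm C.Wp m t p) :=
      mem_filter.2 ⟨C.mem_places.2 (hlay ▸ hj),
        fire_pos_of_Wp_pos (by rw [← congrFun hpp pp, C.bag_self]; exact Nat.one_pos)⟩
    have := pot_le_sum_places hen hpm hj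
    exact (minPotD_le_of_mem hpp_marked).trans (by omega)
  · rw [if_neg hj, if_neg hj] at hsum
    calc _ ≤ _ := minPotD_marked_fire_le m hpm hj
      _ ≤ _ := hl
      _ = _ := by omega

end ClosedPi3

namespace OpenPi3

variable {P T : Type} [Fintype P] [Fintype T] {Nn : ℕ} (O : OpenPi3 P T Nn)

lemma mem_places {p : P} {k : ℕ} : p ∈ O.places k ↔ O.layer p = k := by
  simp [places]

def extend (m : P → ℕ) (k : ℕ) : Option P → ℕ := fun o => o.elim k m

lemma closed_places_of_ne {k : ℕ} (hk : k ≠ Nn) :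
    O.closed.places k = (O.places k).map Function.Embedding.some := by
  ext (_ | p)
  · simp [ClosedPi3.places, O.pext_layer, Ne.symm hk]
  · simp [ClosedPi3.places, mem_places, layer]

lemma closed_places_self [DecidableEq P] :
    O.closed.places Nn = insert none ((O.places Nn).map Function.Embedding.some) := by
  ext (_ | p)
  · simp [ClosedPi3.places, O.pext_layer]
  · simp [ClosedPi3.places, mem_places, layer]

lemma closed_POT_of_ne {k : ℕ} (hk : k ≠ Nn) : O.closed.POT k = O.POT k := by
  rw [ClosedPi3.POT, POT, if_neg hk, O.closed_places_of_ne hk, sup_map]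
  rfl

lemma closed_marked_of_ne (m : P → ℕ) (K : ℕ) {k : ℕ} (hk : k ≠ Nn) :
    (O.closed.places k).filter (fun p => 0 < extend m K p) =
      ((O.places k).filter (fun p => 0 < m p)).map Function.Embedding.some := by
  rw [O.closed_places_of_ne hk, filter_map]
  rfl

lemma closed_marked_self [DecidableEq P] (m : P → ℕ) {K : ℕ} (hK : 0 < K) :
    (O.closed.places Nn).filter (fun p => 0 < extend m K p) =
      insert none (((O.places Nn).filter (fun p => 0 < m p)).map Function.Embedding.some) := by
  rw [O.closed_places_self, filter_insert, if_pos (show 0 < extend m K none from hK), filter_map]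
  rfl

lemma closed_sum_places_of_ne (m : P → ℕ) (K : ℕ) {k : ℕ} (hk : k ≠ Nn) :
    ∑ q ∈ O.closed.places k, extend m K q = ∑ q ∈ O.places k, m q := by
  rw [O.closed_places_of_ne hk, sum_map]
  rfl

lemma closed_liveSet_extend_iff {i : ℕ} (hi : i ≠ Nn) (m : P → ℕ) {K : ℕ} (hK : 0 < K) :
    O.closed.LiveSet i (extend m K) ↔ O.LiveSet i m := by
  classical
  unfold ClosedPi3.LiveSet LiveSet
  rw [if_neg hi, if_neg hi, O.closed_sum_places_of_ne m K hi]
  split_ifs with hi1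
  · rw [hi1, O.closed_marked_self m hK, minPotD_insert, minPotD_map]
    rfl
  · rw [O.closed_marked_of_ne m K hi1, minPotD_map, O.closed_POT_of_ne hi1]
    rfl

variable {O}

lemma liveSet_step {i : ℕ} {m m' : P → ℕ} (hs : Step O.Wm O.Wp m m') (hl : O.LiveSet i m) :
    O.LiveSet i m' := by
  by_cases hi : i = Nn
  · simp [LiveSet, hi]
  obtain ⟨t, hen, rfl⟩ := hs
  have hen_closed : Enabled O.closed.Wm (extend m (O.closed.Wm none t + 1)) t := by
    rintro (_ | p)
    · exact Nat.le_succ _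
    · exact hen p
  have hs_closed : Step O.closed.Wm O.closed.Wp (extend m (O.closed.Wm none t + 1))
      (extend (Fire O.Wm O.Wp m t) (O.closed.Wp none t + 1)) := by
    refine ⟨t, hen_closed, funext fun o => ?_⟩
    cases o
    · simp [extend, Fire]; omega
    · rfl
  rw [← O.closed_liveSet_extend_iff hi _ (Nat.succ_pos (O.closed.Wm none t))] at hl
  rw [← O.closed_liveSet_extend_iff hi _ (Nat.succ_pos (O.closed.Wp none t))]
  exact O.closed.liveSet_step hs_closed hl

end OpenPi3

/-- each set `Live_i` is closed under reachability. -/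
theorem stmt_10 :
    (∀ (P T : Type) [Fintype P] [Fintype T] (Nn : ℕ) (C : ClosedPi3 P T Nn),
      ∀ i ∈ Finset.Icc 1 Nn, ∀ m m' : P → ℕ,
        C.LiveSet i m → Reach C.Wm C.Wp m m' → C.LiveSet i m') ∧
    (∀ (P T : Type) [Fintype P] [Fintype T] (Nn : ℕ) (O : OpenPi3 P T Nn),
      ∀ i ∈ Finset.Icc 1 Nn, ∀ m m' : P → ℕ,
        O.LiveSet i m → Reach O.Wm O.Wp m m' → O.LiveSet i m') :=
  ⟨fun _ _ _ _ _ C _ _ _ _ hl hr => Reach.invariant (fun _ _ => C.liveSet_step) hr hl,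
    fun _ _ _ _ _ _ _ _ _ _ hl hr => Reach.invariant (fun _ _ => OpenPi3.liveSet_step) hr hl⟩
end
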